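/- Let n ≥ 1 be an integer, m ∈ (0,1), and B > 0. For every twice continuously differentiable Ψ : ℝⁿ → ℝ and every x ∈ ℝⁿ, the function v(x) := Ψ(x)/(B+|x|²) satisfies (Lv)(x) = (B+|x|²)^{−1} · [ (B+|x|²)·ΔΨ(x) − (2/(1−m))·x·∇Ψ(x) ]; that is, the operator L intertwines with the operator HΨ := (B+|x|²)ΔΨ − (2/(1−m)) x·∇Ψ under multiplication by (B+|x|²)^{−1}. -/

import Mathlib

open scoped BigOperators

noncomputable section

/-- The `i`-th standard basis vector of `ℝⁿ`. -/
def stdBasis (n : ℕ) (i : Fin n) : EuclideanSpace ℝ (Fin n) :=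
  EuclideanSpace.single i 1

/-- The Laplacian (sum of second partial derivatives) of `f : ℝⁿ → ℝ`. -/
def lap (n : ℕ) (f : EuclideanSpace ℝ (Fin n) → ℝ) (x : EuclideanSpace ℝ (Fin n)) : ℝ :=
  ∑ i : Fin n, fderiv ℝ (fun y => fderiv ℝ f y (stdBasis n i)) x (stdBasis n i)

/-- `x · ∇f x`. -/
def gradDot (n : ℕ) (f : EuclideanSpace ℝ (Fin n) → ℝ) (x : EuclideanSpace ℝ (Fin n)) : ℝ :=
  ∑ i : Fin n, x i * fderiv ℝ f x (stdBasis n i)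

/-- The linearized operator
`(Lv)(x) = (B+|x|²)Δv + (2(1-2m)/(1-m)) x·∇v + 2(n - (2/(1-m))|x|²/(B+|x|²)) v`. -/
def Lop (n : ℕ) (m B : ℝ) (v : EuclideanSpace ℝ (Fin n) → ℝ)
    (x : EuclideanSpace ℝ (Fin n)) : ℝ :=
  (B + ‖x‖ ^ 2) * lap n v x + (2 * (1 - 2 * m) / (1 - m)) * gradDot n v x +
    2 * ((n : ℝ) - (2 / (1 - m)) * ‖x‖ ^ 2 / (B + ‖x‖ ^ 2)) * v x

section Aux
variable {n : ℕ}
/-!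
Write `v = Ψ g` with `g = (B + |x|²)⁻¹`. The Leibniz rules
`Δ(Ψ g) = g ΔΨ + 2 ∇Ψ·∇g + Ψ Δg` and `x·∇(Ψ g) = g x·∇Ψ + Ψ x·∇g`, together with
`∇g = -2 x g²` and `Δg = 8 |x|² g³ - 2 n g²`, express `L v` through `ΔΨ`, `x·∇Ψ` and `Ψ`;
the coefficient of `Ψ` then vanishes identically, and that of `x·∇Ψ` is
`-4 g + 2(1 - 2m)/(1 - m) g = -2/(1 - m) g`.
-/

section PartialDerivatives

variable {n : ℕ}

def partialDeriv (i : Fin n) (f : EuclideanSpace ℝ (Fin n) → ℝ) :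
    EuclideanSpace ℝ (Fin n) → ℝ :=
  fun y => fderiv ℝ f y (stdBasis n i)

theorem lap_eq_sum_partialDeriv (f : EuclideanSpace ℝ (Fin n) → ℝ)
    (x : EuclideanSpace ℝ (Fin n)) :
    lap n f x = ∑ i, partialDeriv i (partialDeriv i f) x :=
  rfl

theorem gradDot_eq_sum_partialDeriv (f : EuclideanSpace ℝ (Fin n) → ℝ)
    (x : EuclideanSpace ℝ (Fin n)) :
    gradDot n f x = ∑ i, x i * partialDeriv i f x :=
  rfl

theorem contDiff_partialDeriv {k : WithTop ℕ∞} {f : EuclideanSpace ℝ (Fin n) → ℝ}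
    (hf : ContDiff ℝ (k + 1) f) (i : Fin n) : ContDiff ℝ k (partialDeriv i f) :=
  (hf.fderiv_right le_rfl).clm_apply contDiff_const

theorem partialDeriv_add {f g : EuclideanSpace ℝ (Fin n) → ℝ} {y : EuclideanSpace ℝ (Fin n)}
    (hf : DifferentiableAt ℝ f y) (hg : DifferentiableAt ℝ g y) (i : Fin n) :
    partialDeriv i (fun z => f z + g z) y = partialDeriv i f y + partialDeriv i g y := by
  simp only [partialDeriv, fderiv_fun_add hf hg, add_apply]

theorem partialDeriv_const_mul {f : EuclideanSpace ℝ (Fin n) → ℝ} {y : EuclideanSpace ℝ (Fin n)}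
    (hf : DifferentiableAt ℝ f y) (c : ℝ) (i : Fin n) :
    partialDeriv i (fun z => c * f z) y = c * partialDeriv i f y := by
  simp only [partialDeriv, fderiv_const_mul hf, smul_apply, smul_eq_mul]

theorem partialDeriv_mul {f g : EuclideanSpace ℝ (Fin n) → ℝ} {y : EuclideanSpace ℝ (Fin n)}
    (hf : DifferentiableAt ℝ f y) (hg : DifferentiableAt ℝ g y) (i : Fin n) :
    partialDeriv i (fun z => f z * g z) y =
      f y * partialDeriv i g y + partialDeriv i f y * g y := by
  simp only [partialDeriv, fderiv_fun_mul hf hg, add_apply, smul_apply, smul_eq_mul]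
  ring

theorem partialDeriv_inv {w : EuclideanSpace ℝ (Fin n) → ℝ} {y : EuclideanSpace ℝ (Fin n)}
    (hw : DifferentiableAt ℝ w y) (hy : w y ≠ 0) (i : Fin n) :
    partialDeriv i (fun z => (w z)⁻¹) y = -partialDeriv i w y / w y ^ 2 := by
  have h := (hasDerivAt_inv hy).comp_hasFDerivAt y hw.hasFDerivAt
  simp only [partialDeriv, Function.comp_def] at h ⊢
  rw [h.fderiv]
  simp only [smul_apply, smul_eq_mul]
  ring

theorem partialDeriv_coord (i : Fin n) (y : EuclideanSpace ℝ (Fin n)) :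
    partialDeriv i (fun z => z i) y = 1 := by
  change fderiv ℝ (EuclideanSpace.proj (𝕜 := ℝ) i) y (stdBasis n i) = 1
  rw [ContinuousLinearMap.fderiv]
  simp [stdBasis]

theorem lap_mul {f g : EuclideanSpace ℝ (Fin n) → ℝ} (hf : ContDiff ℝ 2 f) (hg : ContDiff ℝ 2 g)
    (x : EuclideanSpace ℝ (Fin n)) :
    lap n (fun z => f z * g z) x =
      f x * lap n g x + 2 * ∑ i, partialDeriv i f x * partialDeriv i g x + lap n f x * g x := by
  have hf1 : Differentiable ℝ f := hf.differentiable two_ne_zero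
  have hg1 : Differentiable ℝ g := hg.differentiable two_ne_zero
  have hf' (i : Fin n) : Differentiable ℝ (partialDeriv i f) :=
    (contDiff_partialDeriv hf i).differentiable one_ne_zero
  have hg' (i : Fin n) : Differentiable ℝ (partialDeriv i g) :=
    (contDiff_partialDeriv hg i).differentiable one_ne_zero
  have hfirst (i : Fin n) : partialDeriv i (fun z => f z * g z) =
      fun y => f y * partialDeriv i g y + partialDeriv i f y * g y :=
    funext fun y => partialDeriv_mul (hf1 y) (hg1 y) i
  simp only [lap_eq_sum_partialDeriv, hfirst, Finset.mul_sum, Finset.sum_mul,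
    ← Finset.sum_add_distrib]
  refine Finset.sum_congr rfl fun i _ => ?_
  rw [partialDeriv_add ((hf1 x).fun_mul (hg' i x)) ((hf' i x).fun_mul (hg1 x)),
    partialDeriv_mul (hf1 x) (hg' i x), partialDeriv_mul (hf' i x) (hg1 x)]
  ring

theorem gradDot_mul {f g : EuclideanSpace ℝ (Fin n) → ℝ} {x : EuclideanSpace ℝ (Fin n)}
    (hf : DifferentiableAt ℝ f x) (hg : DifferentiableAt ℝ g x) :
    gradDot n (fun z => f z * g z) x = f x * gradDot n g x + gradDot n f x * g x := by
  simp only [gradDot_eq_sum_partialDeriv, partialDeriv_mul hf hg, Finset.mul_sum, Finset.sum_mul,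
    ← Finset.sum_add_distrib]
  refine Finset.sum_congr rfl fun i _ => ?_
  ring

end PartialDerivatives

section InverseWeight

variable {n : ℕ} {B : ℝ}

def invWeight (B : ℝ) : EuclideanSpace ℝ (Fin n) → ℝ :=
  fun z => (B + ‖z‖ ^ 2)⁻¹

theorem contDiff_invWeight (hB : 0 < B) {k : WithTop ℕ∞} :
    ContDiff ℝ k (invWeight (n := n) B) :=
  (contDiff_const.add (contDiff_norm_sq ℝ)).inv fun z => (by positivity : B + ‖z‖ ^ 2 ≠ 0)

theorem partialDeriv_invWeight (hB : 0 < B) (i : Fin n) (y : EuclideanSpace ℝ (Fin n)) :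
    partialDeriv i (invWeight B) y = -2 * (y i * (invWeight B y * invWeight B y)) := by
  have hw : DifferentiableAt ℝ (fun z : EuclideanSpace ℝ (Fin n) => B + ‖z‖ ^ 2) y :=
    (differentiableAt_const B).add (differentiableAt_id.norm_sq ℝ)
  have hw' : partialDeriv i (fun z : EuclideanSpace ℝ (Fin n) => B + ‖z‖ ^ 2) y = 2 * y i := by
    simp [partialDeriv, fderiv_norm_sq_apply, stdBasis, EuclideanSpace.inner_single_right]
  have hy : B + ‖y‖ ^ 2 ≠ 0 := by positivity
  rw [show invWeight B = fun z => (B + ‖z‖ ^ 2)⁻¹ from rfl, partialDeriv_inv hw hy, hw']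
  field_simp

theorem partialDeriv_partialDeriv_invWeight (hB : 0 < B) (i : Fin n)
    (x : EuclideanSpace ℝ (Fin n)) :
    partialDeriv i (partialDeriv i (invWeight B)) x =
      8 * x i ^ 2 * invWeight B x ^ 3 - 2 * invWeight B x ^ 2 := by
  have hg : Differentiable ℝ (invWeight (n := n) B) :=
    (contDiff_invWeight hB (k := 1)).differentiable one_ne_zero
  have hcoord : Differentiable ℝ fun z : EuclideanSpace ℝ (Fin n) => z i :=
    (EuclideanSpace.proj (𝕜 := ℝ) i).differentiable
  rw [show partialDeriv i (invWeight B) = _ from funext (partialDeriv_invWeight hB i),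
    partialDeriv_const_mul ((hcoord x).fun_mul ((hg x).fun_mul (hg x))),
    partialDeriv_mul (hcoord x) ((hg x).fun_mul (hg x)), partialDeriv_mul (hg x) (hg x),
    partialDeriv_invWeight hB, partialDeriv_coord]
  ring

theorem lap_invWeight (hB : 0 < B) (x : EuclideanSpace ℝ (Fin n)) :
    lap n (invWeight B) x = 8 * ‖x‖ ^ 2 * invWeight B x ^ 3 - 2 * n * invWeight B x ^ 2 := by
  simp only [lap_eq_sum_partialDeriv, partialDeriv_partialDeriv_invWeight hB,
    Finset.sum_sub_distrib, ← Finset.sum_mul, ← Finset.mul_sum, ← EuclideanSpace.real_norm_sq_eq,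
    Finset.sum_const, Finset.card_univ, Fintype.card_fin, nsmul_eq_mul]
  ring

theorem gradDot_invWeight (hB : 0 < B) (x : EuclideanSpace ℝ (Fin n)) :
    gradDot n (invWeight B) x = -2 * ‖x‖ ^ 2 * invWeight B x ^ 2 := by
  simp only [gradDot_eq_sum_partialDeriv, partialDeriv_invWeight hB,
    EuclideanSpace.real_norm_sq_eq, Finset.mul_sum, Finset.sum_mul]
  exact Finset.sum_congr rfl fun i _ => by ring

theorem sum_partialDeriv_mul_partialDeriv_invWeight (hB : 0 < B)
    (f : EuclideanSpace ℝ (Fin n) → ℝ) (x : EuclideanSpace ℝ (Fin n)) :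
    ∑ i, partialDeriv i f x * partialDeriv i (invWeight B) x =
      -2 * invWeight B x ^ 2 * gradDot n f x := by
  simp only [partialDeriv_invWeight hB, gradDot_eq_sum_partialDeriv, Finset.mul_sum]
  exact Finset.sum_congr rfl fun i _ => by ring

end InverseWeight

theorem statement15_general
    (n : ℕ) (m : ℝ) (hm : m ∈ Set.Ioo (0 : ℝ) 1) (B : ℝ) (hB : 0 < B)
    (Ψ : EuclideanSpace ℝ (Fin n) → ℝ) (hΨ : ContDiff ℝ 2 Ψ)
    (x : EuclideanSpace ℝ (Fin n)) :
    Lop n m B (fun z => Ψ z / (B + ‖z‖ ^ 2)) x =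
      (B + ‖x‖ ^ 2)⁻¹ *
        ((B + ‖x‖ ^ 2) * lap n Ψ x - (2 / (1 - m)) * gradDot n Ψ x) := by
  have hg : ContDiff ℝ 2 (invWeight (n := n) B) := contDiff_invWeight hB
  have hv : (fun z => Ψ z / (B + ‖z‖ ^ 2)) = fun z => Ψ z * invWeight B z := rfl
  have hw : B + ‖x‖ ^ 2 ≠ 0 := by positivity
  have h1m : 1 - m ≠ 0 := by linarith [hm.2]
  rw [Lop, hv, lap_mul hΨ hg, gradDot_mul (hΨ.differentiable two_ne_zero x)
    (hg.differentiable two_ne_zero x), lap_invWeight hB, gradDot_invWeight hB,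
    sum_partialDeriv_mul_partialDeriv_invWeight hB]
  simp only [invWeight]
  field_simp
  ring

/-- **Intertwining of `L` with `H`** : for `v = Ψ/(B+|x|²)` one has
`(Lv)(x) = (B+|x|²)^{-1} [(B+|x|²)ΔΨ - (2/(1-m)) x·∇Ψ]`. -/
theorem statement15
    (n : ℕ) (hn : 1 ≤ n) (m : ℝ) (hm : m ∈ Set.Ioo (0 : ℝ) 1) (B : ℝ) (hB : 0 < B)
    (Ψ : EuclideanSpace ℝ (Fin n) → ℝ) (hΨ : ContDiff ℝ 2 Ψ)
    (x : EuclideanSpace ℝ (Fin n)) :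
    Lop n m B (fun z => Ψ z / (B + ‖z‖ ^ 2)) x =
      (B + ‖x‖ ^ 2)⁻¹ *
        ((B + ‖x‖ ^ 2) * lap n Ψ x - (2 / (1 - m)) * gradDot n Ψ x) :=
  statement15_general n m hm B hB Ψ hΨ x
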